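/- arXiv:2106.05743 — 6 statements merged into one kernel-verified Lean document; each statement's English description precedes it below -/
import Mathlib

section
/- Let d ≥ 2 and let Λ be a ℂ-linear map on d×d complex matrices that maps every density matrix to a density matrix. Let ε ≥ 0 and suppose ‖Λ((1/d)·I) − e₀e₀ᴴ‖_F² ≤ ε, where e₀ ∈ ℂ^d is the first standard basis vector. Then for every unit vector ψ ∈ ℂ^d, ‖Λ(ψψᴴ) − e₀e₀ᴴ‖_F² ≤ 2·√(d(d−1)ε). -/
open Matrix
open scoped ComplexOrder

/-- Squared Frobenius norm: `‖A‖_F² = Re Tr(Aᴴ A)`. -/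
noncomputable def frobSq {d : ℕ} (A : Matrix (Fin d) (Fin d) ℂ) : ℝ :=
  ((Aᴴ * A).trace).re

/-- A density matrix: positive semidefinite with trace 1. -/
def IsDensityMatrix {d : ℕ} (ρ : Matrix (Fin d) (Fin d) ℂ) : Prop :=
  ρ.PosSemidef ∧ ρ.trace = 1

lemma frobSq_eq {d : ℕ} (A : Matrix (Fin d) (Fin d) ℂ) :
    frobSq A = ∑ j, ∑ i, Complex.normSq (A i j) := by
  rw [frobSq, Matrix.trace]
  rw [Complex.re_sum]
  apply Finset.sum_congr rfl
  intro j _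
  simp only [Matrix.diag_apply, Matrix.mul_apply, Matrix.conjTranspose_apply]
  rw [Complex.re_sum]
  apply Finset.sum_congr rfl
  intro i _
  simp [Complex.normSq_apply, Complex.mul_re]

lemma psd_diag_nonneg {d : ℕ} {ρ : Matrix (Fin d) (Fin d) ℂ} (hρ : ρ.PosSemidef) (i : Fin d) :
    0 ≤ (ρ i i).re ∧ (ρ i i).im = 0 := by
  have h := hρ.dotProduct_mulVec_nonneg (Pi.single i 1)
  have he : star (Pi.single i 1 : Fin d → ℂ) ⬝ᵥ (ρ *ᵥ (Pi.single i 1 : Fin d → ℂ)) = ρ i i := by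
    have hs : star (Pi.single i 1 : Fin d → ℂ) = Pi.single i 1 := by
      ext k; by_cases hk : k = i <;> simp [hk, Pi.single_apply]
    rw [hs, single_dotProduct, Matrix.mulVec_single]
    simp
  rw [he] at h
  rw [Complex.le_def] at h
  simp at h
  exact ⟨h.1, h.2.symm⟩

lemma density_trace_re {d : ℕ} {ρ : Matrix (Fin d) (Fin d) ℂ} (hρ : IsDensityMatrix ρ) :
    ∑ i, (ρ i i).re = 1 := by
  have := congrArg Complex.re hρ.2
  rw [Matrix.trace] at this
  rw [Complex.re_sum] at this
  simpa using this

lemma density_diag_le_one {d : ℕ} {ρ : Matrix (Fin d) (Fin d) ℂ} (hρ : IsDensityMatrix ρ)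
    (k : Fin d) : (ρ k k).re ≤ 1 := by
  rw [← density_trace_re hρ]
  exact Finset.single_le_sum (fun i _ => (psd_diag_nonneg hρ.1 i).1) (Finset.mem_univ k)

lemma frobSq_le_one {d : ℕ} {ρ : Matrix (Fin d) (Fin d) ℂ} (hρ : IsDensityMatrix ρ) :
    frobSq ρ ≤ 1 := by
  obtain ⟨hpsd, htr⟩ := hρ
  have hherm : ρ.IsHermitian := hpsd.1
  set U : Matrix (Fin d) (Fin d) ℂ := (hherm.eigenvectorUnitary : Matrix (Fin d) (Fin d) ℂ) with hUdef
  have hU' : star U * U = 1 := Matrix.mem_unitaryGroup_iff'.mp hherm.eigenvectorUnitary.2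
  set D : Matrix (Fin d) (Fin d) ℂ := Matrix.diagonal (RCLike.ofReal ∘ hherm.eigenvalues) with hDdef
  have hspec : ρ = U * D * star U := hherm.spectral_theorem
  have h1 : ∑ i, hherm.eigenvalues i = 1 := by
    have ht : ρ.trace = D.trace := by
      conv_lhs => rw [hspec]
      rw [Matrix.trace_mul_comm, ← Matrix.mul_assoc, hU', Matrix.one_mul]
    rw [htr, hDdef, Matrix.trace_diagonal] at ht
    have := congrArg Complex.re ht.symm
    rw [Complex.re_sum] at this
    simpa using this
  have h2 : frobSq ρ = ∑ i, (hherm.eigenvalues i) ^ 2 := by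
    have ht2 : (ρ * ρ).trace = (D * D).trace := by
      conv_lhs => rw [hspec]
      rw [show U * D * star U * (U * D * star U)
            = U * (D * ((star U * U) * (D * star U))) from by
          simp only [Matrix.mul_assoc], hU', Matrix.one_mul]
      rw [Matrix.trace_mul_comm]
      simp only [Matrix.mul_assoc]
      rw [hU', Matrix.mul_one]
    rw [frobSq, hherm, ht2, hDdef, Matrix.diagonal_mul_diagonal, Matrix.trace_diagonal,
      Complex.re_sum]
    apply Finset.sum_congr rfl
    intro i _
    simp [pow_two]
  rw [h2]
  calc ∑ i, (hherm.eigenvalues i) ^ 2 ≤ (∑ i, hherm.eigenvalues i) ^ 2 :=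
        Finset.sum_sq_le_sq_sum_of_nonneg (fun i _ => hpsd.eigenvalues_nonneg i)
    _ = 1 := by rw [h1]; norm_num

lemma frobSq_sub_std {d : ℕ} (k : Fin d) (M : Matrix (Fin d) (Fin d) ℂ) :
    frobSq (M - Matrix.single k k 1) = frobSq M - (2 * (M k k).re - 1) := by
  rw [frobSq_eq, frobSq_eq]
  have key : ∀ j i, Complex.normSq ((M - Matrix.single k k (1:ℂ)) i j)
      = Complex.normSq (M i j) -
        (if j = k then (if i = k then 2 * (M k k).re - 1 else 0) else 0) := by
    intro j i
    by_cases hj : j = k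
    · by_cases hi : i = k
      · subst hi; subst hj
        rw [Matrix.sub_apply, Matrix.single_apply_same]
        simp only [if_pos rfl]
        rw [Complex.normSq_sub]
        simp [Complex.normSq_apply]
        ring
      · rw [Matrix.sub_apply, show Matrix.single k k (1:ℂ) i j = 0 from
          Matrix.single_apply_of_ne k k 1 i j (by tauto)]
        simp [hi]
    · rw [Matrix.sub_apply, show Matrix.single k k (1:ℂ) i j = 0 from
        Matrix.single_apply_of_ne k k 1 i j (by tauto)]
      simp [hj]
  simp_rw [key]
  rw [Finset.sum_congr rfl (fun j _ => Finset.sum_sub_distrib _ _), Finset.sum_sub_distrib]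
  congr 1
  simp [Finset.sum_ite_eq']

lemma density_sub_le {d : ℕ} (k : Fin d) {ρ : Matrix (Fin d) (Fin d) ℂ}
    (hρ : IsDensityMatrix ρ) :
    frobSq (ρ - Matrix.single k k 1) ≤ 2 * (1 - (ρ k k).re) := by
  rw [frobSq_sub_std]
  have := frobSq_le_one hρ
  linarith

lemma smul_posSemidef {d : ℕ} {M : Matrix (Fin d) (Fin d) ℂ} (hM : M.PosSemidef)
    {r : ℝ} (hr : 0 ≤ r) : (((r : ℂ)) • M).PosSemidef := by
  apply Matrix.PosSemidef.of_dotProduct_mulVec_nonneg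
  · show ((r:ℂ) • M)ᴴ = (r:ℂ) • M
    rw [Matrix.conjTranspose_smul, hM.1]
    congr 1
    exact Complex.conj_ofReal r
  · intro x
    rw [Matrix.smul_mulVec, dotProduct_smul, smul_eq_mul]
    exact mul_nonneg (by rw [Complex.le_def]; simp [hr]) (hM.dotProduct_mulVec_nonneg x)

theorem stmt0 (d : ℕ) (hd : 2 ≤ d)
    (Λ : Matrix (Fin d) (Fin d) ℂ →ₗ[ℂ] Matrix (Fin d) (Fin d) ℂ)
    (hΛ : ∀ ρ : Matrix (Fin d) (Fin d) ℂ, IsDensityMatrix ρ → IsDensityMatrix (Λ ρ))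
    (ε : ℝ) (hε : 0 ≤ ε)
    (h : frobSq (Λ ((d : ℂ)⁻¹ • (1 : Matrix (Fin d) (Fin d) ℂ)) -
          Matrix.single (⟨0, by omega⟩ : Fin d) (⟨0, by omega⟩ : Fin d) 1) ≤ ε)
    (ψ : Fin d → ℂ) (hψ : star ψ ⬝ᵥ ψ = 1) :
    frobSq (Λ (Matrix.vecMulVec ψ (star ψ)) -
        Matrix.single (⟨0, by omega⟩ : Fin d) (⟨0, by omega⟩ : Fin d) 1)
      ≤ 2 * Real.sqrt ((d : ℝ) * ((d : ℝ) - 1) * ε) := by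
  have hdR : (2:ℝ) ≤ (d:ℝ) := by exact_mod_cast hd
  have hd0 : (0:ℝ) < (d:ℝ) := by linarith
  have hd1 : (0:ℝ) < (d:ℝ) - 1 := by linarith
  set k0 : Fin d := ⟨0, by omega⟩ with hk0
  have hψsum : ∑ k, (starRingEnd ℂ) (ψ k) * ψ k = 1 := by
    simpa [dotProduct] using hψ
  set Q := Matrix.vecMulVec ψ (star ψ) with hQdef
  have hQapp : ∀ i j, Q i j = ψ i * (starRingEnd ℂ) (ψ j) := by
    intro i j; simp [hQdef, Matrix.vecMulVec_apply]
  have hQQ : Q * Q = Q := by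
    ext i j
    rw [Matrix.mul_apply]
    simp_rw [hQapp]
    calc ∑ k, ψ i * (starRingEnd ℂ) (ψ k) * (ψ k * (starRingEnd ℂ) (ψ j))
        = (ψ i * (starRingEnd ℂ) (ψ j)) * ∑ k, (starRingEnd ℂ) (ψ k) * ψ k := by
          rw [Finset.mul_sum]; apply Finset.sum_congr rfl; intros; ring
      _ = ψ i * (starRingEnd ℂ) (ψ j) := by rw [hψsum, mul_one]
  have hQH : Qᴴ = Q := by
    ext i j
    rw [Matrix.conjTranspose_apply, hQapp, hQapp]
    simp [mul_comm]
  have hQtrace : Q.trace = 1 := by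
    rw [Matrix.trace]
    simp only [Matrix.diag_apply]
    rw [← hψsum]
    apply Finset.sum_congr rfl
    intro i _
    rw [hQapp]; ring
  have hQpsd : Q.PosSemidef := by
    have : Q = (Matrix.replicateRow Unit (star ψ))ᴴ * (Matrix.replicateRow Unit (star ψ)) := by
      ext i j
      rw [Matrix.mul_apply, hQapp]
      simp [Matrix.replicateRow_apply, Matrix.conjTranspose_apply]
    rw [this]
    exact Matrix.posSemidef_conjTranspose_mul_self _
  have hQden : IsDensityMatrix Q := ⟨hQpsd, hQtrace⟩
  set R := (1 : Matrix (Fin d) (Fin d) ℂ) - Q with hRdef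
  have hRH : Rᴴ = R := by
    rw [hRdef, Matrix.conjTranspose_sub, hQH, Matrix.conjTranspose_one]
  have hRpsd : R.PosSemidef := by
    have : R = Rᴴ * R := by
      rw [hRH, hRdef, Matrix.sub_mul, Matrix.mul_sub, Matrix.mul_sub, hQQ]
      simp only [Matrix.mul_one, Matrix.one_mul]
      abel
    rw [this]
    exact Matrix.posSemidef_conjTranspose_mul_self _
  have hRtrace : R.trace = (d:ℂ) - 1 := by
    rw [hRdef, Matrix.trace_sub, hQtrace, Matrix.trace_one]
    simp
  -- τ
  have hcast1 : ((d:ℂ) - 1)⁻¹ = ((((d:ℝ) - 1)⁻¹ : ℝ) : ℂ) := by push_cast; ring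
  have hcast2 : (d:ℂ)⁻¹ = (((d:ℝ)⁻¹ : ℝ) : ℂ) := by push_cast; ring
  set τ := ((d:ℂ) - 1)⁻¹ • R with hτdef
  have hdc1 : ((d:ℂ) - 1) ≠ 0 := by
    intro hc
    have := congrArg Complex.re hc
    simp at this
    linarith
  have hdc0 : (d:ℂ) ≠ 0 := by
    intro hc
    have := congrArg Complex.re hc
    simp at this
    linarith
  have hτpsd : τ.PosSemidef := by
    rw [hτdef, hcast1]
    exact smul_posSemidef hRpsd (by positivity)
  have hτtrace : τ.trace = 1 := by
    rw [hτdef, Matrix.trace_smul, hRtrace, smul_eq_mul, inv_mul_cancel₀ hdc1]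
  have hτden : IsDensityMatrix τ := ⟨hτpsd, hτtrace⟩
  have hIden : IsDensityMatrix ((d:ℂ)⁻¹ • (1 : Matrix (Fin d) (Fin d) ℂ)) := by
    constructor
    · rw [hcast2]
      exact smul_posSemidef Matrix.PosSemidef.one (by positivity)
    · rw [Matrix.trace_smul, Matrix.trace_one, smul_eq_mul]
      simp [inv_mul_cancel₀ hdc0]
  -- decomposition
  have hdecomp : (d:ℂ)⁻¹ • (1 : Matrix (Fin d) (Fin d) ℂ)
      = (d:ℂ)⁻¹ • Q + (((d:ℂ) - 1) * (d:ℂ)⁻¹) • τ := by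
    rw [hτdef, smul_smul]
    rw [show ((d:ℂ) - 1) * (d:ℂ)⁻¹ * ((d:ℂ) - 1)⁻¹ = (d:ℂ)⁻¹ by
      field_simp]
    rw [← smul_add, hRdef]
    congr 1
    abel
  set σ := Λ ((d:ℂ)⁻¹ • (1 : Matrix (Fin d) (Fin d) ℂ)) with hσdef
  set A := Λ Q with hAdef
  set B := Λ τ with hBdef
  have hσeq : σ = (d:ℂ)⁻¹ • A + (((d:ℂ) - 1) * (d:ℂ)⁻¹) • B := by
    rw [hσdef, hdecomp, map_add, LinearMap.map_smul, LinearMap.map_smul, hAdef, hBdef]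
  have hAden : IsDensityMatrix A := hΛ _ hQden
  have hBden : IsDensityMatrix B := hΛ _ hτden
  have hσden : IsDensityMatrix σ := hΛ _ hIden
  set a := (A k0 k0).re with hadef
  set b := (B k0 k0).re with hbdef
  set s := (σ k0 k0).re with hsdef
  -- s in terms of a b
  have hs : (d:ℝ) * s = a + ((d:ℝ) - 1) * b := by
    have h1 : σ k0 k0 = (d:ℂ)⁻¹ * A k0 k0 + ((d:ℂ) - 1) * (d:ℂ)⁻¹ * B k0 k0 := by
      rw [hσeq]
      simp [Matrix.add_apply, Matrix.smul_apply, smul_eq_mul]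
    rw [hcast2, show ((d:ℂ) - 1) = ((((d:ℝ) - 1) : ℝ) : ℂ) by push_cast; ring] at h1
    have h2 := congrArg Complex.re h1
    rw [Complex.add_re] at h2
    simp only [Complex.mul_re, Complex.ofReal_re, Complex.ofReal_im, Complex.mul_im,
      zero_mul, mul_zero, sub_zero, zero_add, add_zero, zero_sub, neg_zero] at h2
    rw [hsdef, h2, hadef, hbdef]
    field_simp
  have ha0 : 0 ≤ a := (psd_diag_nonneg hAden.1 k0).1
  have hb1 : b ≤ 1 := density_diag_le_one hBden k0
  have hs1 : s ≤ 1 := density_diag_le_one hσden k0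
  have h1a : 1 - a ≤ (d:ℝ) * (1 - s) := by nlinarith [hs, hb1, hd1]
  have hdiagle : ∑ i, Complex.normSq ((σ - Matrix.single k0 k0 (1:ℂ)) i i) ≤ ε := by
    refine le_trans ?_ h
    rw [frobSq_eq]
    apply Finset.sum_le_sum
    intro j _
    exact Finset.single_le_sum
      (f := fun i => Complex.normSq ((σ - Matrix.single k0 k0 (1:ℂ)) i j))
      (fun i _ => Complex.normSq_nonneg _) (Finset.mem_univ j)
  have hresq : ∀ i, (((σ - Matrix.single k0 k0 (1:ℂ)) i i).re)^2
      ≤ Complex.normSq ((σ - Matrix.single k0 k0 (1:ℂ)) i i) := by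
    intro i
    rw [Complex.normSq_apply]
    nlinarith [sq_nonneg ((σ - Matrix.single k0 k0 (1:ℂ)) i i).im]
  have hsplit : (s - 1)^2 + ∑ i ∈ Finset.univ.erase k0, ((σ i i).re)^2 ≤ ε := by
    refine le_trans ?_ hdiagle
    have heq : (s - 1)^2 + ∑ i ∈ Finset.univ.erase k0, ((σ i i).re)^2
        = ∑ i, (((σ - Matrix.single k0 k0 (1:ℂ)) i i).re)^2 := by
      rw [← Finset.add_sum_erase _ _ (Finset.mem_univ k0)]
      congr 1
      · apply Finset.sum_congr rfl
        intro i hi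
        have hik : i ≠ k0 := (Finset.mem_erase.mp hi).1
        rw [Matrix.sub_apply, show Matrix.single k0 k0 (1:ℂ) i i = 0 from
          Matrix.single_apply_of_ne k0 k0 1 i i (by tauto), sub_zero]
    rw [heq]
    exact Finset.sum_le_sum (fun i _ => hresq i)
  have htr' : ∑ i ∈ Finset.univ.erase k0, (σ i i).re = 1 - s := by
    have hh := density_trace_re hσden
    rw [← Finset.add_sum_erase _ _ (Finset.mem_univ k0)] at hh
    rw [← hsdef] at hh
    linarith
  have hCS : (1 - s)^2 ≤ ((d:ℝ) - 1) * ∑ i ∈ Finset.univ.erase k0, ((σ i i).re)^2 := by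
    have hineq := sq_sum_le_card_mul_sum_sq (s := Finset.univ.erase k0)
      (f := fun i => (σ i i).re)
    rw [htr'] at hineq
    have hcard : (Finset.univ.erase k0).card = d - 1 := by
      rw [Finset.card_erase_of_mem (Finset.mem_univ k0), Finset.card_univ, Fintype.card_fin]
    rw [hcard] at hineq
    have hcast : ((d - 1 : ℕ) : ℝ) = (d:ℝ) - 1 := by
      rw [Nat.cast_sub (by omega)]; simp
    rw [hcast] at hineq
    exact hineq
  have h5 : (1 - s)^2 * (d:ℝ) ≤ ((d:ℝ) - 1) * ε := by
    nlinarith [hCS, mul_le_mul_of_nonneg_left hsplit hd1.le]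
  have hkey : ((d:ℝ) * (1 - s))^2 ≤ (d:ℝ) * ((d:ℝ) - 1) * ε := by
    calc ((d:ℝ) * (1 - s))^2 = (d:ℝ) * ((1 - s)^2 * (d:ℝ)) := by ring
      _ ≤ (d:ℝ) * (((d:ℝ) - 1) * ε) := mul_le_mul_of_nonneg_left h5 hd0.le
      _ = (d:ℝ) * ((d:ℝ) - 1) * ε := by ring
  have hs1' : 0 ≤ (d:ℝ) * (1 - s) := mul_nonneg hd0.le (by linarith)
  have hsqrt : (d:ℝ) * (1 - s) ≤ Real.sqrt ((d:ℝ) * ((d:ℝ) - 1) * ε) := by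
    calc (d:ℝ) * (1 - s) = Real.sqrt (((d:ℝ) * (1 - s))^2) := (Real.sqrt_sq hs1').symm
      _ ≤ _ := Real.sqrt_le_sqrt hkey
  calc frobSq (A - Matrix.single k0 k0 1)
      ≤ 2 * (1 - (A k0 k0).re) := density_sub_le k0 hAden
    _ ≤ 2 * ((d:ℝ) * (1 - s)) := by rw [← hadef]; linarith
    _ ≤ 2 * Real.sqrt ((d:ℝ) * ((d:ℝ) - 1) * ε) := by linarith
end

section
/- Let V be a real inner product space, d ≥ 1 a natural number, r ≥ 0 and ε ≥ 0. If a, a', g ∈ V satisfy ‖a‖ ≤ r, ‖a'‖ ≤ r, ‖g‖ = r and ‖(1/d)·a + ((d−1)/d)·a' − g‖² ≤ ε, then ‖a − g‖² ≤ 2·r·d·√ε. -/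
open scoped InnerProductSpace

theorem stmt1 {V : Type*} [NormedAddCommGroup V] [InnerProductSpace ℝ V]
    (d : ℕ) (hd : 1 ≤ d) (r ε : ℝ) (hr : 0 ≤ r) (hε : 0 ≤ ε)
    (a a' g : V) (ha : ‖a‖ ≤ r) (ha' : ‖a'‖ ≤ r) (hg : ‖g‖ = r)
    (h : ‖(1 / (d : ℝ)) • a + (((d : ℝ) - 1) / (d : ℝ)) • a' - g‖ ^ 2 ≤ ε) :
    ‖a - g‖ ^ 2 ≤ 2 * r * (d : ℝ) * Real.sqrt ε := by
  set x := (1 / (d : ℝ)) • a + (((d : ℝ) - 1) / (d : ℝ)) • a' - g with hxdef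
  have hd' : (1 : ℝ) ≤ (d : ℝ) := by exact_mod_cast hd
  have hd0 : (0 : ℝ) < (d : ℝ) := by linarith
  have hx : ‖x‖ ≤ Real.sqrt ε := by
    have h1 : ‖x‖ = Real.sqrt (‖x‖ ^ 2) := by
      rw [Real.sqrt_sq (norm_nonneg _)]
    rw [h1]
    exact Real.sqrt_le_sqrt h
  have hxg : ⟪x, g⟫_ℝ = (1 / (d : ℝ)) * ⟪a, g⟫_ℝ
      + (((d : ℝ) - 1) / (d : ℝ)) * ⟪a', g⟫_ℝ - r ^ 2 := by
    simp [hxdef, inner_sub_left, inner_add_left, real_inner_smul_left,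
      real_inner_self_eq_norm_sq, hg]
  have ha'g : ⟪a', g⟫_ℝ ≤ r ^ 2 := by
    calc ⟪a', g⟫_ℝ ≤ ‖a'‖ * ‖g‖ := real_inner_le_norm _ _
    _ ≤ r * r := by rw [hg]; exact mul_le_mul_of_nonneg_right ha' hr
    _ = r ^ 2 := by ring
  have hxgl : -(Real.sqrt ε * r) ≤ ⟪x, g⟫_ℝ := by
    have := abs_real_inner_le_norm x g
    have h2 : ‖x‖ * ‖g‖ ≤ Real.sqrt ε * r := by
      rw [hg]; exact mul_le_mul_of_nonneg_right hx hr
    have h3 := neg_abs_le (⟪x, g⟫_ℝ)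
    nlinarith [abs_nonneg (⟪x, g⟫_ℝ)]
  have hag : ‖a - g‖ ^ 2 = ‖a‖ ^ 2 - 2 * ⟪a, g⟫_ℝ + ‖g‖ ^ 2 :=
    norm_sub_sq_real a g
  have hna : ‖a‖ ^ 2 ≤ r ^ 2 := by nlinarith [norm_nonneg a]
  have key : ⟪a, g⟫_ℝ = (d : ℝ) * (⟪x, g⟫_ℝ + r ^ 2) - ((d : ℝ) - 1) * ⟪a', g⟫_ℝ := by
    field_simp at hxg ⊢
    nlinarith [hxg]
  rw [hag, hg]
  nlinarith [mul_le_mul_of_nonneg_left ha'g (by linarith : (0:ℝ) ≤ (d:ℝ) - 1),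
    mul_le_mul_of_nonneg_left hxgl (by linarith : (0:ℝ) ≤ (d:ℝ))]
end

section
/- Let φ be a positive-definite density matrix on ℂ^d with spectral decomposition φ = Σ_n λ_n u_n u_nᴴ, and let θ ∈ ℝ. Then for every d×d complex matrix Y, the quantity ⟨Y, S_{φ,θ}(Y)⟩ is a nonnegative real number and satisfies ⟨Y, S_{φ,θ}(Y)⟩ ≤ (1/2)(e^{θ/2}·Tr(φ Y Yᴴ) + e^{−θ/2}·Tr(φ Yᴴ Y)) ≤ (1/2)(e^{θ/2} + e^{−θ/2})·‖Y‖_∞², where the middle traces are real and nonnegative. -/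
open Matrix
open scoped ComplexOrder

/-- The logarithmic mean of two reals: `Φ(x,y) = (x−y)/(ln x − ln y)` for `x ≠ y`, `Φ(x,x) = x`. -/
noncomputable def logMean (x y : ℝ) : ℝ :=
  if x = y then x else (x - y) / (Real.log x - Real.log y)

/-- The tilted operator `S_{φ,θ}` associated with the spectral data `(lam, u)` of `φ`:
`S_{φ,θ}(X) = Σ_{n,m} Φ(e^{θ/2} λ_n, e^{−θ/2} λ_m) (u_nᴴ X u_m) u_n u_mᴴ`. -/
noncomputable def tilted {d : ℕ} (lam : Fin d → ℝ) (u : Fin d → Fin d → ℂ) (θ : ℝ)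
    (X : Matrix (Fin d) (Fin d) ℂ) : Matrix (Fin d) (Fin d) ℂ :=
  ∑ n : Fin d, ∑ m : Fin d,
    ((logMean (Real.exp (θ / 2) * lam n) (Real.exp (-θ / 2) * lam m) : ℝ) : ℂ) •
      ((star (u n) ⬝ᵥ (X *ᵥ u m)) • Matrix.vecMulVec (u n) (star (u m)))

/-- Spectral (ℓ²-operator) norm of a matrix. -/
noncomputable def specNorm {d : ℕ} (Y : Matrix (Fin d) (Fin d) ℂ) : ℝ :=
  ‖Matrix.toEuclideanCLM (𝕜 := ℂ) Y‖

section Helpers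
open Matrix

/- ## logMean lemmas -/

private lemma logMean_log_ge (x : ℝ) (hx : 0 < x) : 1 - 1/x ≤ Real.log x := by
  have h := Real.log_le_sub_one_of_pos (x := 1/x) (by positivity)
  rw [Real.log_div one_ne_zero hx.ne', Real.log_one] at h
  linarith

private lemma logMean_key (t : ℝ) (ht : 1 ≤ t) : 2*(t-1) ≤ (t+1) * Real.log t := by
  set f : ℝ → ℝ := fun s => (s+1) * Real.log s - 2*(s-1) with hf
  have hder : ∀ x : ℝ, 0 < x → HasDerivAt f (1 * Real.log x + (x+1) * (1/x) - 2) x := by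
    intro x hx0
    have h1 : HasDerivAt (fun s : ℝ => s + 1) 1 x := (hasDerivAt_id x).add_const 1
    have h2 : HasDerivAt Real.log (1/x) x := by
      simpa [one_div] using Real.hasDerivAt_log hx0.ne'
    exact ((h1.mul h2).sub (((hasDerivAt_id x).sub_const 1).const_mul 2)).congr_deriv (by ring)
  have hmono : MonotoneOn f (Set.Ici 1) := by
    apply monotoneOn_of_deriv_nonneg (convex_Ici 1)
    · intro x hx
      exact (hder x (by simp at hx; linarith)).continuousAt.continuousWithinAt
    · intro x hx
      rw [interior_Ici] at hx
      exact ((hder x (by linarith [Set.mem_Ioi.mp hx])).differentiableAt.differentiableWithinAt)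
    · intro x hx
      rw [interior_Ici] at hx
      have hx1 : (1:ℝ) < x := hx
      have hx0 : (0:ℝ) < x := by linarith
      rw [(hder x hx0).deriv]
      have := logMean_log_ge x hx0
      have hxi : (x+1)*(1/x) = 1 + 1/x := by field_simp
      nlinarith
  have h0 : f 1 ≤ f t := hmono (by simp) (by simpa using ht) ht
  simp [hf] at h0
  linarith

private lemma logMean_symm (x y : ℝ) : logMean x y = logMean y x := by
  unfold logMean
  rcases eq_or_ne x y with h | h
  · simp [h]
  · rw [if_neg h, if_neg (Ne.symm h), ← neg_sub x y, ← neg_sub (Real.log x), neg_div_neg_eq]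

private lemma logMean_nonneg {x y : ℝ} (hx : 0 < x) (hy : 0 < y) : 0 ≤ logMean x y := by
  unfold logMean
  split
  · linarith
  · rename_i h
    rcases lt_or_gt_of_ne h with hlt | hlt
    · have := Real.log_lt_log hx hlt
      rw [← neg_sub y x, ← neg_sub (Real.log y), neg_div_neg_eq]
      apply div_nonneg <;> linarith
    · have := Real.log_lt_log hy hlt
      apply div_nonneg <;> linarith

private lemma logMean_le_arith_aux {x y : ℝ} (hx : 0 < x) (hy : 0 < y) (hle : y ≤ x) :
    logMean x y ≤ (x + y) / 2 := by
  rcases eq_or_lt_of_le hle with heq | hlt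
  · unfold logMean; rw [heq, if_pos rfl]; linarith
  · unfold logMean
    rw [if_neg (by intro hc; rw [hc] at hlt; exact lt_irrefl y hlt)]
    have hlog : Real.log y < Real.log x := Real.log_lt_log hy hlt
    rw [div_le_iff₀ (by linarith)]
    have ht : 1 ≤ x / y := (one_le_div hy).mpr hle
    have hk := logMean_key (x/y) ht
    rw [Real.log_div hx.ne' hy.ne'] at hk
    have h2 : 2 * (x/y - 1) = (2*x-2*y)/y := by field_simp
    have h3 : (x/y + 1) = (x+y)/y := by field_simp
    rw [h2, h3, div_le_iff₀ hy, div_mul_eq_mul_div, div_mul_eq_mul_div, mul_div_assoc,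
      div_self hy.ne', mul_one] at hk
    linarith

private lemma logMean_le_arith {x y : ℝ} (hx : 0 < x) (hy : 0 < y) :
    logMean x y ≤ (x + y) / 2 := by
  rcases le_total y x with hle | hle
  · exact logMean_le_arith_aux hx hy hle
  · rw [logMean_symm, add_comm]; exact logMean_le_arith_aux hy hx hle

/- ## orthonormality / completeness -/

variable {d : ℕ} (u : Fin d → Fin d → ℂ)

private lemma comp1 (horth : ∀ n m, star (u n) ⬝ᵥ u m = if n = m then 1 else 0) :
    ∀ i j, ∑ n, u n i * (starRingEnd ℂ) (u n j) = if i = j then 1 else 0 := by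
  set V : Matrix (Fin d) (Fin d) ℂ := Matrix.of fun i n => u n i with hV
  have h1 : Vᴴ * V = 1 := by
    ext n m
    simp only [Matrix.mul_apply, Matrix.conjTranspose_apply, hV, Matrix.of_apply,
      Matrix.one_apply]
    simpa [dotProduct] using horth n m
  have h2 : V * Vᴴ = 1 := mul_eq_one_comm.mp h1
  intro i j
  have := congrFun (congrFun h2 i) j
  simpa [Matrix.mul_apply, Matrix.conjTranspose_apply, hV, Matrix.one_apply] using this

private lemma comp2 (horth : ∀ n m, star (u n) ⬝ᵥ u m = if n = m then 1 else 0) :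
    ∀ i j, ∑ n, (starRingEnd ℂ) (u n i) * u n j = if i = j then 1 else 0 := by
  intro i j
  simpa [map_sum, _root_.map_mul, Complex.conj_conj, apply_ite]
    using congrArg (starRingEnd ℂ) (comp1 u horth i j)

private lemma parseval1 (horth : ∀ n m, star (u n) ⬝ᵥ u m = if n = m then 1 else 0)
    (w : Fin d → ℂ) :
    ∑ n, (star (u n) ⬝ᵥ w) * (starRingEnd ℂ) (star (u n) ⬝ᵥ w)
      = ∑ i, w i * (starRingEnd ℂ) (w i) := by
  have expand : ∀ n, (star (u n) ⬝ᵥ w) * (starRingEnd ℂ) (star (u n) ⬝ᵥ w)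
      = ∑ i, ∑ j, (w i * (starRingEnd ℂ) (w j)) * ((starRingEnd ℂ) (u n i) * u n j) := by
    intro n
    simp only [dotProduct, Pi.star_apply, map_sum, _root_.map_mul, Finset.sum_mul_sum,
      Complex.star_def, Complex.conj_conj]
    refine Finset.sum_congr rfl fun i _ => Finset.sum_congr rfl fun j _ => by ring
  rw [Finset.sum_congr rfl (fun n _ => expand n), Finset.sum_comm]
  refine Finset.sum_congr rfl fun i _ => ?_
  rw [Finset.sum_comm]
  calc ∑ j, ∑ n, (w i * (starRingEnd ℂ) (w j)) * ((starRingEnd ℂ) (u n i) * u n j)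
      = ∑ j, (w i * (starRingEnd ℂ) (w j)) * (∑ n, (starRingEnd ℂ) (u n i) * u n j) := by
        simp [Finset.mul_sum]
    _ = w i * (starRingEnd ℂ) (w i) := by
        simp [comp2 u horth, Finset.sum_ite_eq, apply_ite, mul_ite]

private lemma parseval2 (horth : ∀ n m, star (u n) ⬝ᵥ u m = if n = m then 1 else 0)
    (w : Fin d → ℂ) :
    ∑ m, (star w ⬝ᵥ u m) * (starRingEnd ℂ) (star w ⬝ᵥ u m) = star w ⬝ᵥ w := by
  have expand : ∀ m, (star w ⬝ᵥ u m) * (starRingEnd ℂ) (star w ⬝ᵥ u m)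
      = ∑ i, ∑ j, ((starRingEnd ℂ) (w i) * w j) * (u m i * (starRingEnd ℂ) (u m j)) := by
    intro m
    simp only [dotProduct, Pi.star_apply, map_sum, _root_.map_mul, Finset.sum_mul_sum,
      Complex.star_def, Complex.conj_conj]
    refine Finset.sum_congr rfl fun i _ => Finset.sum_congr rfl fun j _ => by ring
  rw [Finset.sum_congr rfl (fun m _ => expand m), Finset.sum_comm]
  refine Finset.sum_congr rfl fun i _ => ?_
  rw [Finset.sum_comm]
  calc ∑ j, ∑ m, ((starRingEnd ℂ) (w i) * w j) * (u m i * (starRingEnd ℂ) (u m j))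
      = ∑ j, ((starRingEnd ℂ) (w i) * w j) * (∑ m, u m i * (starRingEnd ℂ) (u m j)) := by
        simp [Finset.mul_sum]
    _ = (starRingEnd ℂ) (w i) * w i := by
        simp [comp1 u horth, Finset.sum_ite_eq, apply_ite, mul_ite]

/- ## trace computations -/

variable (Y : Matrix (Fin d) (Fin d) ℂ)

private lemma trace_conjT_vecMulVec (a b : Fin d → ℂ) :
    (Yᴴ * Matrix.vecMulVec a (star b)).trace = (starRingEnd ℂ) (star a ⬝ᵥ (Y *ᵥ b)) := by
  simp only [Matrix.trace, Matrix.diag_apply, Matrix.mul_apply, Matrix.vecMulVec_apply,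
    Matrix.conjTranspose_apply, dotProduct, Matrix.mulVec, Pi.star_apply,
    Complex.star_def, map_sum, _root_.map_mul, Complex.conj_conj, Finset.mul_sum]
  rw [Finset.sum_comm]
  exact Finset.sum_congr rfl fun i _ => Finset.sum_congr rfl fun j _ => by ring

private lemma dot_conjT (M : Matrix (Fin d) (Fin d) ℂ) (a b : Fin d → ℂ) :
    star a ⬝ᵥ (M *ᵥ b) = star (Mᴴ *ᵥ a) ⬝ᵥ b := by
  simp only [dotProduct, Matrix.mulVec, Matrix.conjTranspose_apply, Pi.star_apply,
    Complex.star_def, _root_.map_mul, map_sum, Complex.conj_conj, Finset.mul_sum,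
    Finset.sum_mul]
  rw [Finset.sum_comm]
  exact Finset.sum_congr rfl fun i _ => Finset.sum_congr rfl fun j _ => by ring

private lemma trace_vecMulVec_left (a b : Fin d → ℂ) (M : Matrix (Fin d) (Fin d) ℂ) :
    (Matrix.vecMulVec a b * M).trace = b ⬝ᵥ (M *ᵥ a) := by
  simp only [Matrix.trace, Matrix.diag_apply, Matrix.mul_apply, Matrix.vecMulVec_apply,
    dotProduct, Matrix.mulVec, Finset.mul_sum]
  rw [Finset.sum_comm]
  exact Finset.sum_congr rfl fun i _ => Finset.sum_congr rfl fun j _ => by ring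

private lemma dot_self_normSq (w : Fin d → ℂ) :
    star w ⬝ᵥ w = ((∑ i, Complex.normSq (w i) : ℝ) : ℂ) := by
  push_cast
  simp only [dotProduct, Pi.star_apply, Complex.star_def,
    Complex.normSq_eq_conj_mul_self]

private lemma L1 (lam : Fin d → ℝ) (θ : ℝ) : (Yᴴ * tilted lam u θ Y).trace =
    ((∑ n, ∑ m, logMean (Real.exp (θ/2) * lam n) (Real.exp (-θ/2) * lam m)
      * Complex.normSq (star (u n) ⬝ᵥ (Y *ᵥ u m)) : ℝ) : ℂ) := by
  unfold tilted
  push_cast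
  simp only [Matrix.mul_sum, Matrix.trace_sum, Matrix.mul_smul, Matrix.trace_smul,
    trace_conjT_vecMulVec, smul_eq_mul]
  refine Finset.sum_congr rfl fun n _ => Finset.sum_congr rfl fun m _ => ?_
  rw [Complex.mul_conj]

private lemma L2 (lam : Fin d → ℝ) :
    ((∑ n, (lam n : ℂ) • Matrix.vecMulVec (u n) (star (u n))) * Y * Yᴴ).trace
    = ∑ n, (lam n : ℂ) * (star (Yᴴ *ᵥ u n) ⬝ᵥ (Yᴴ *ᵥ u n)) := by
  simp only [Matrix.sum_mul, Matrix.smul_mul, Matrix.trace_sum, Matrix.trace_smul,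
    smul_eq_mul, mul_assoc Y, Matrix.mul_assoc (Matrix.vecMulVec _ _),
    trace_vecMulVec_left, ← Matrix.mulVec_mulVec]
  exact Finset.sum_congr rfl fun n _ => by rw [dot_conjT]

private lemma L3 (lam : Fin d → ℝ) :
    ((∑ n, (lam n : ℂ) • Matrix.vecMulVec (u n) (star (u n))) * Yᴴ * Y).trace
    = ∑ m, (lam m : ℂ) * (star (Y *ᵥ u m) ⬝ᵥ (Y *ᵥ u m)) := by
  simp only [Matrix.sum_mul, Matrix.smul_mul, Matrix.trace_sum, Matrix.trace_smul,
    smul_eq_mul, Matrix.mul_assoc (Matrix.vecMulVec _ _),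
    trace_vecMulVec_left, ← Matrix.mulVec_mulVec]
  refine Finset.sum_congr rfl fun m _ => ?_
  rw [dot_conjT, Matrix.conjTranspose_conjTranspose]

/- ## operator norm bounds -/

private lemma euclid_norm_sq (y : Fin d → ℂ) :
    ‖(WithLp.equiv 2 (Fin d → ℂ)).symm y‖ ^ 2 = ∑ i, Complex.normSq (y i) := by
  rw [EuclideanSpace.norm_eq, Real.sq_sqrt (by positivity)]
  refine Finset.sum_congr rfl fun i _ => ?_
  rw [Complex.normSq_eq_norm_sq]; rfl

private lemma normbound (M : Matrix (Fin d) (Fin d) ℂ) (x : Fin d → ℂ) :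
    ∑ i, Complex.normSq ((M *ᵥ x) i) ≤
      ‖Matrix.toEuclideanCLM (𝕜 := ℂ) M‖ ^ 2 * ∑ i, Complex.normSq (x i) := by
  rw [← euclid_norm_sq, ← euclid_norm_sq]
  have h : Matrix.toEuclideanCLM (𝕜 := ℂ) M ((WithLp.equiv 2 (Fin d → ℂ)).symm x)
      = (WithLp.equiv 2 (Fin d → ℂ)).symm (M *ᵥ x) := by
    rfl
  rw [← h, ← mul_pow]
  exact pow_le_pow_left₀ (norm_nonneg _)
    (ContinuousLinearMap.le_opNorm (Matrix.toEuclideanCLM (𝕜 := ℂ) M) _) 2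

private lemma norm_conjT :
    ‖Matrix.toEuclideanCLM (𝕜 := ℂ) Yᴴ‖ = ‖Matrix.toEuclideanCLM (𝕜 := ℂ) Y‖ := by
  rw [← Matrix.star_eq_conjTranspose, map_star, ContinuousLinearMap.star_eq_adjoint]
  exact LinearIsometryEquiv.norm_map ContinuousLinearMap.adjoint _

end Helpers

theorem stmt6 (d : ℕ) (lam : Fin d → ℝ) (u : Fin d → Fin d → ℂ)
    (hpos : ∀ n, 0 < lam n)
    (horth : ∀ n m, star (u n) ⬝ᵥ u m = if n = m then 1 else 0)
    (φ : Matrix (Fin d) (Fin d) ℂ)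
    (hφ : φ = ∑ n : Fin d, (lam n : ℂ) • Matrix.vecMulVec (u n) (star (u n)))
    (htr : φ.trace = 1)
    (θ : ℝ) (Y : Matrix (Fin d) (Fin d) ℂ) :
    ((Yᴴ * tilted lam u θ Y).trace).im = 0 ∧
    0 ≤ ((Yᴴ * tilted lam u θ Y).trace).re ∧
    ((φ * Y * Yᴴ).trace).im = 0 ∧ 0 ≤ ((φ * Y * Yᴴ).trace).re ∧
    ((φ * Yᴴ * Y).trace).im = 0 ∧ 0 ≤ ((φ * Yᴴ * Y).trace).re ∧
    ((Yᴴ * tilted lam u θ Y).trace).re ≤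
      (1 / 2) * (Real.exp (θ / 2) * ((φ * Y * Yᴴ).trace).re +
        Real.exp (-θ / 2) * ((φ * Yᴴ * Y).trace).re) ∧
    (1 / 2) * (Real.exp (θ / 2) * ((φ * Y * Yᴴ).trace).re +
        Real.exp (-θ / 2) * ((φ * Yᴴ * Y).trace).re) ≤
      (1 / 2) * (Real.exp (θ / 2) + Real.exp (-θ / 2)) * specNorm Y ^ 2 := by
  have ha0 : (0:ℝ) < Real.exp (θ/2) := Real.exp_pos _
  have hb0 : (0:ℝ) < Real.exp (-θ/2) := Real.exp_pos _
  have hNdef : specNorm Y = ‖Matrix.toEuclideanCLM (𝕜 := ℂ) Y‖ := rfl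
  have hN0 : 0 ≤ specNorm Y := by rw [hNdef]; exact norm_nonneg _
  -- basis vectors are unit vectors
  have hun : ∀ n, ∑ i, Complex.normSq (u n i) = 1 := by
    intro n
    have h := horth n n
    rw [dot_self_normSq, if_pos rfl] at h
    exact_mod_cast h
  -- Parseval identities
  have hr : ∀ n, ∑ m, Complex.normSq (star (u n) ⬝ᵥ (Y *ᵥ u m))
      = ∑ i, Complex.normSq ((Yᴴ *ᵥ u n) i) := by
    intro n
    have hp := parseval2 u horth (Yᴴ *ᵥ u n)
    rw [dot_self_normSq] at hp
    have hp2 : ∑ m, ((Complex.normSq (star (u n) ⬝ᵥ (Y *ᵥ u m)) : ℝ) : ℂ)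
        = ((∑ i, Complex.normSq ((Yᴴ *ᵥ u n) i) : ℝ) : ℂ) := by
      rw [← hp]
      refine Finset.sum_congr rfl fun m _ => ?_
      rw [← dot_conjT, Complex.mul_conj]
    rw [← Complex.ofReal_sum] at hp2
    exact_mod_cast hp2
  have hs : ∀ m, ∑ n, Complex.normSq (star (u n) ⬝ᵥ (Y *ᵥ u m))
      = ∑ i, Complex.normSq ((Y *ᵥ u m) i) := by
    intro m
    have hp := parseval1 u horth (Y *ᵥ u m)
    have hp2 : ∑ n, ((Complex.normSq (star (u n) ⬝ᵥ (Y *ᵥ u m)) : ℝ) : ℂ)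
        = ((∑ i, Complex.normSq ((Y *ᵥ u m) i) : ℝ) : ℂ) := by
      calc ∑ n, ((Complex.normSq (star (u n) ⬝ᵥ (Y *ᵥ u m)) : ℝ) : ℂ)
          = ∑ n, (star (u n) ⬝ᵥ (Y *ᵥ u m)) * (starRingEnd ℂ) (star (u n) ⬝ᵥ (Y *ᵥ u m)) :=
            Finset.sum_congr rfl fun n _ => (Complex.mul_conj _).symm
        _ = ∑ i, (Y *ᵥ u m) i * (starRingEnd ℂ) ((Y *ᵥ u m) i) := hp
        _ = ((∑ i, Complex.normSq ((Y *ᵥ u m) i) : ℝ) : ℂ) := by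
            push_cast
            exact Finset.sum_congr rfl fun i _ => Complex.mul_conj _
    rw [← Complex.ofReal_sum] at hp2
    exact_mod_cast hp2
  -- trace representations
  have hT1 := L1 u Y lam θ
  have hT2 : (φ * Y * Yᴴ).trace
      = ((∑ n, lam n * ∑ i, Complex.normSq ((Yᴴ *ᵥ u n) i) : ℝ) : ℂ) := by
    rw [hφ, L2]
    push_cast
    exact Finset.sum_congr rfl fun n _ => by rw [dot_self_normSq]; push_cast; ring
  have hT3 : (φ * Yᴴ * Y).trace
      = ((∑ m, lam m * ∑ i, Complex.normSq ((Y *ᵥ u m) i) : ℝ) : ℂ) := by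
    rw [hφ, L3]
    push_cast
    exact Finset.sum_congr rfl fun m _ => by rw [dot_self_normSq]; push_cast; ring
  -- sum of eigenvalues is 1
  have hlam1 : ∑ n, lam n = 1 := by
    rw [hφ] at htr
    have htrW : ∀ n, (Matrix.vecMulVec (u n) (star (u n))).trace = ((1:ℝ):ℂ) := by
      intro n
      have : (Matrix.vecMulVec (u n) (star (u n))).trace
          = ∑ i, ((Complex.normSq (u n i) : ℝ) : ℂ) := by
        simp only [Matrix.trace, Matrix.diag_apply, Matrix.vecMulVec_apply, Pi.star_apply,
          Complex.star_def, Complex.mul_conj]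
      rw [this, ← Complex.ofReal_sum, hun n]
    rw [Matrix.trace_sum] at htr
    simp only [Matrix.trace_smul, htrW, smul_eq_mul, Complex.ofReal_one, mul_one] at htr
    exact_mod_cast htr
  -- nonnegativity facts
  have hq0 : ∀ n m, (0:ℝ) ≤ Complex.normSq (star (u n) ⬝ᵥ (Y *ᵥ u m)) :=
    fun n m => Complex.normSq_nonneg _
  have hR0 : 0 ≤ ∑ n, lam n * ∑ i, Complex.normSq ((Yᴴ *ᵥ u n) i) :=
    Finset.sum_nonneg fun n _ => mul_nonneg (hpos n).le
      (Finset.sum_nonneg fun i _ => Complex.normSq_nonneg _)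
  have hS0 : 0 ≤ ∑ m, lam m * ∑ i, Complex.normSq ((Y *ᵥ u m) i) :=
    Finset.sum_nonneg fun m _ => mul_nonneg (hpos m).le
      (Finset.sum_nonneg fun i _ => Complex.normSq_nonneg _)
  have hS1nn : 0 ≤ ∑ n, ∑ m, logMean (Real.exp (θ/2) * lam n) (Real.exp (-θ/2) * lam m)
      * Complex.normSq (star (u n) ⬝ᵥ (Y *ᵥ u m)) :=
    Finset.sum_nonneg fun n _ => Finset.sum_nonneg fun m _ =>
      mul_nonneg (logMean_nonneg (mul_pos ha0 (hpos n)) (mul_pos hb0 (hpos m))) (hq0 n m)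
  -- middle inequality
  have hmid : (∑ n, ∑ m, logMean (Real.exp (θ/2) * lam n) (Real.exp (-θ/2) * lam m)
        * Complex.normSq (star (u n) ⬝ᵥ (Y *ᵥ u m)))
      ≤ (1/2) * (Real.exp (θ/2) * ∑ n, lam n * ∑ i, Complex.normSq ((Yᴴ *ᵥ u n) i)
        + Real.exp (-θ/2) * ∑ m, lam m * ∑ i, Complex.normSq ((Y *ᵥ u m) i)) := by
    have step : (∑ n, ∑ m, logMean (Real.exp (θ/2) * lam n) (Real.exp (-θ/2) * lam m)
        * Complex.normSq (star (u n) ⬝ᵥ (Y *ᵥ u m)))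
        ≤ ∑ n, ∑ m, ((Real.exp (θ/2) * lam n + Real.exp (-θ/2) * lam m)/2)
            * Complex.normSq (star (u n) ⬝ᵥ (Y *ᵥ u m)) :=
      Finset.sum_le_sum fun n _ => Finset.sum_le_sum fun m _ =>
        mul_le_mul_of_nonneg_right
          (logMean_le_arith (mul_pos ha0 (hpos n)) (mul_pos hb0 (hpos m))) (hq0 n m)
    refine step.trans (le_of_eq ?_)
    calc ∑ n, ∑ m, ((Real.exp (θ/2) * lam n + Real.exp (-θ/2) * lam m)/2)
            * Complex.normSq (star (u n) ⬝ᵥ (Y *ᵥ u m))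
        = (∑ n, ∑ m, (1/2) * (Real.exp (θ/2)
              * (lam n * Complex.normSq (star (u n) ⬝ᵥ (Y *ᵥ u m)))))
          + ∑ n, ∑ m, (1/2) * (Real.exp (-θ/2)
              * (lam m * Complex.normSq (star (u n) ⬝ᵥ (Y *ᵥ u m)))) := by
          rw [← Finset.sum_add_distrib]
          refine Finset.sum_congr rfl fun n _ => ?_
          rw [← Finset.sum_add_distrib]
          exact Finset.sum_congr rfl fun m _ => by ring
      _ = (1/2) * (Real.exp (θ/2) * ∑ n, lam n * ∑ i, Complex.normSq ((Yᴴ *ᵥ u n) i))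
          + (1/2) * (Real.exp (-θ/2) * ∑ m, lam m * ∑ i, Complex.normSq ((Y *ᵥ u m) i)) := by
          rw [Finset.sum_comm (f := fun n m => (1/2) * (Real.exp (-θ/2)
              * (lam m * Complex.normSq (star (u n) ⬝ᵥ (Y *ᵥ u m)))))]
          congr 1
          · calc ∑ n, ∑ m, (1/2) * (Real.exp (θ/2)
                  * (lam n * Complex.normSq (star (u n) ⬝ᵥ (Y *ᵥ u m))))
                = ∑ n, (1/2) * (Real.exp (θ/2)
                    * (lam n * ∑ i, Complex.normSq ((Yᴴ *ᵥ u n) i))) := by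
                  refine Finset.sum_congr rfl fun n _ => ?_
                  rw [← hr n]
                  simp [Finset.mul_sum]
              _ = (1/2) * (Real.exp (θ/2)
                    * ∑ n, lam n * ∑ i, Complex.normSq ((Yᴴ *ᵥ u n) i)) := by
                  simp only [Finset.mul_sum]
          · calc ∑ m, ∑ n, (1/2) * (Real.exp (-θ/2)
                  * (lam m * Complex.normSq (star (u n) ⬝ᵥ (Y *ᵥ u m))))
                = ∑ m, (1/2) * (Real.exp (-θ/2)
                    * (lam m * ∑ i, Complex.normSq ((Y *ᵥ u m) i))) := by
                  refine Finset.sum_congr rfl fun m _ => ?_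
                  rw [← hs m]
                  simp [Finset.mul_sum]
              _ = (1/2) * (Real.exp (-θ/2)
                    * ∑ m, lam m * ∑ i, Complex.normSq ((Y *ᵥ u m) i)) := by
                  simp only [Finset.mul_sum]
      _ = (1/2) * (Real.exp (θ/2) * ∑ n, lam n * ∑ i, Complex.normSq ((Yᴴ *ᵥ u n) i)
          + Real.exp (-θ/2) * ∑ m, lam m * ∑ i, Complex.normSq ((Y *ᵥ u m) i)) := by ring
  -- norm bounds
  have hrb : ∀ n, ∑ i, Complex.normSq ((Yᴴ *ᵥ u n) i) ≤ specNorm Y ^ 2 := by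
    intro n
    have h := normbound Yᴴ (u n)
    rw [hun n, mul_one, norm_conjT] at h
    rw [hNdef]
    exact h
  have hsb : ∀ m, ∑ i, Complex.normSq ((Y *ᵥ u m) i) ≤ specNorm Y ^ 2 := by
    intro m
    have h := normbound Y (u m)
    rw [hun m, mul_one] at h
    rw [hNdef]
    exact h
  have hRb : ∑ n, lam n * ∑ i, Complex.normSq ((Yᴴ *ᵥ u n) i) ≤ specNorm Y ^ 2 := by
    calc ∑ n, lam n * ∑ i, Complex.normSq ((Yᴴ *ᵥ u n) i)
        ≤ ∑ n, lam n * specNorm Y ^ 2 :=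
          Finset.sum_le_sum fun n _ => mul_le_mul_of_nonneg_left (hrb n) (hpos n).le
      _ = specNorm Y ^ 2 := by rw [← Finset.sum_mul, hlam1, one_mul]
  have hSb : ∑ m, lam m * ∑ i, Complex.normSq ((Y *ᵥ u m) i) ≤ specNorm Y ^ 2 := by
    calc ∑ m, lam m * ∑ i, Complex.normSq ((Y *ᵥ u m) i)
        ≤ ∑ m, lam m * specNorm Y ^ 2 :=
          Finset.sum_le_sum fun m _ => mul_le_mul_of_nonneg_left (hsb m) (hpos m).le
      _ = specNorm Y ^ 2 := by rw [← Finset.sum_mul, hlam1, one_mul]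
  refine ⟨by rw [hT1]; exact Complex.ofReal_im _,
    by rw [hT1]; rw [Complex.ofReal_re]; exact hS1nn,
    by rw [hT2]; exact Complex.ofReal_im _,
    by rw [hT2]; rw [Complex.ofReal_re]; exact hR0,
    by rw [hT3]; exact Complex.ofReal_im _,
    by rw [hT3]; rw [Complex.ofReal_re]; exact hS0,
    ?_, ?_⟩
  · rw [hT1, hT2, hT3, Complex.ofReal_re, Complex.ofReal_re, Complex.ofReal_re]
    exact hmid
  · rw [hT2, hT3, Complex.ofReal_re, Complex.ofReal_re]
    nlinarith [mul_le_mul_of_nonneg_left hRb ha0.le, mul_le_mul_of_nonneg_left hSb hb0.le]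
end

section
/- Let φ be a positive-definite density matrix on ℂ^d with spectral decomposition φ = Σ_n λ_n u_n u_nᴴ, let K be a finite index set, {L_k}_{k∈K} a family of d×d complex matrices and {θ_k}_{k∈K} real numbers, and define the superoperator O_φ(ν) := (1/2)·Σ_{k∈K} e^{−θ_k/2}·[L_k, S_{φ,θ_k}([L_kᴴ, ν])]. Then for all d×d complex matrices ξ and ν, the quantities ⟨ξ, O_φ(ξ)⟩ and ⟨ν, O_φ(ν)⟩ are nonnegative real numbers and the Cauchy–Schwarz inequality |⟨ξ, O_φ(ν)⟩|² ≤ ⟨ξ, O_φ(ξ)⟩·⟨ν, O_φ(ν)⟩ holds. -/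
open Matrix
open scoped ComplexOrder

/-- The superoperator `O_φ(ν) = (1/2) Σ_k e^{−θ_k/2} [L_k, S_{φ,θ_k}([L_kᴴ, ν])]`. -/
noncomputable def superO {d : ℕ} {K : Type*} [Fintype K] (lam : Fin d → ℝ)
    (u : Fin d → Fin d → ℂ) (θk : K → ℝ) (L : K → Matrix (Fin d) (Fin d) ℂ)
    (ν : Matrix (Fin d) (Fin d) ℂ) : Matrix (Fin d) (Fin d) ℂ :=
  (2 : ℂ)⁻¹ • ∑ k : K, ((Real.exp (-θk k / 2) : ℝ) : ℂ) •
    (L k * tilted lam u (θk k) ((L k)ᴴ * ν - ν * (L k)ᴴ) -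
      tilted lam u (θk k) ((L k)ᴴ * ν - ν * (L k)ᴴ) * L k)

lemma logMean_pos {x y : ℝ} (hx : 0 < x) (hy : 0 < y) : 0 < logMean x y := by
  unfold logMean
  split
  · exact hx
  · rename_i h
    rcases lt_or_gt_of_ne h with h' | h'
    · exact div_pos_of_neg_of_neg (by linarith) (by simpa using Real.log_lt_log hx h')
    · exact div_pos (by linarith) (by simpa using sub_pos.mpr (Real.log_lt_log hy h'))

lemma trace_conjT_mul_vecMulVec {d : ℕ} (A : Matrix (Fin d) (Fin d) ℂ) (v w : Fin d → ℂ) :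
    (Aᴴ * Matrix.vecMulVec v (star w)).trace = starRingEnd ℂ (star v ⬝ᵥ (A *ᵥ w)) := by
  simp only [Matrix.trace, Matrix.diag, Matrix.mul_apply, Matrix.conjTranspose_apply,
    Matrix.vecMulVec_apply, dotProduct, Matrix.mulVec, map_sum, _root_.map_mul, Pi.star_apply,
    starRingEnd_apply, star_star, Finset.mul_sum]
  rw [Finset.sum_comm]
  apply Finset.sum_congr rfl; intro i _
  apply Finset.sum_congr rfl; intro j _
  ring

lemma trace_conjT_mul_tilted {d : ℕ} (lam : Fin d → ℝ) (u : Fin d → Fin d → ℂ) (θ : ℝ)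
    (A Z : Matrix (Fin d) (Fin d) ℂ) :
    (Aᴴ * tilted lam u θ Z).trace = ∑ n : Fin d, ∑ m : Fin d,
      ((logMean (Real.exp (θ / 2) * lam n) (Real.exp (-θ / 2) * lam m) : ℝ) : ℂ) *
        starRingEnd ℂ (star (u n) ⬝ᵥ (A *ᵥ u m)) * (star (u n) ⬝ᵥ (Z *ᵥ u m)) := by
  unfold tilted
  rw [Matrix.mul_sum, Matrix.trace_sum]
  apply Finset.sum_congr rfl; intro n _
  rw [Matrix.mul_sum, Matrix.trace_sum]
  apply Finset.sum_congr rfl; intro m _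
  rw [Matrix.mul_smul, Matrix.trace_smul, Matrix.mul_smul, Matrix.trace_smul,
    trace_conjT_mul_vecMulVec]
  simp [smul_smul]; ring

lemma trace_superO {d : ℕ} {K : Type*} [Fintype K] (lam : Fin d → ℝ)
    (u : Fin d → Fin d → ℂ) (θk : K → ℝ) (L : K → Matrix (Fin d) (Fin d) ℂ)
    (ξ ν : Matrix (Fin d) (Fin d) ℂ) :
    (ξᴴ * superO lam u θk L ν).trace = ∑ k : K, ∑ n : Fin d, ∑ m : Fin d,
      (((2 : ℝ)⁻¹ * Real.exp (-θk k / 2) *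
        logMean (Real.exp (θk k / 2) * lam n) (Real.exp (-θk k / 2) * lam m) : ℝ) : ℂ) *
        starRingEnd ℂ (star (u n) ⬝ᵥ (((L k)ᴴ * ξ - ξ * (L k)ᴴ) *ᵥ u m)) *
        (star (u n) ⬝ᵥ (((L k)ᴴ * ν - ν * (L k)ᴴ) *ᵥ u m)) := by
  unfold superO
  rw [Matrix.mul_smul, Matrix.trace_smul, Matrix.mul_sum, Matrix.trace_sum, Finset.smul_sum]
  apply Finset.sum_congr rfl; intro k _
  rw [Matrix.mul_smul, Matrix.trace_smul]
  set S := tilted lam u (θk k) ((L k)ᴴ * ν - ν * (L k)ᴴ) with hS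
  have h1 : (ξᴴ * (L k * S - S * L k)).trace = ((((L k)ᴴ * ξ - ξ * (L k)ᴴ))ᴴ * S).trace := by
    rw [Matrix.mul_sub, Matrix.trace_sub, ← Matrix.mul_assoc, ← Matrix.mul_assoc,
      Matrix.trace_mul_comm (ξᴴ * S) (L k), ← Matrix.mul_assoc]
    rw [Matrix.conjTranspose_sub, Matrix.conjTranspose_mul, Matrix.conjTranspose_mul,
      Matrix.conjTranspose_conjTranspose, Matrix.sub_mul, Matrix.trace_sub]
  rw [h1, hS, trace_conjT_mul_tilted]
  simp only [Finset.smul_sum]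
  apply Finset.sum_congr rfl; intro n _
  apply Finset.sum_congr rfl; intro m _
  simp only [smul_eq_mul]
  push_cast
  ring

theorem stmt7 (d : ℕ) (lam : Fin d → ℝ) (u : Fin d → Fin d → ℂ)
    (hpos : ∀ n, 0 < lam n)
    (horth : ∀ n m, star (u n) ⬝ᵥ u m = if n = m then 1 else 0)
    (φ : Matrix (Fin d) (Fin d) ℂ)
    (hφ : φ = ∑ n : Fin d, (lam n : ℂ) • Matrix.vecMulVec (u n) (star (u n)))
    (htr : φ.trace = 1)
    (K : Type*) [Fintype K] (θk : K → ℝ) (L : K → Matrix (Fin d) (Fin d) ℂ)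
    (ξ ν : Matrix (Fin d) (Fin d) ℂ) :
    ((ξᴴ * superO lam u θk L ξ).trace).im = 0 ∧
    0 ≤ ((ξᴴ * superO lam u θk L ξ).trace).re ∧
    ((νᴴ * superO lam u θk L ν).trace).im = 0 ∧
    0 ≤ ((νᴴ * superO lam u θk L ν).trace).re ∧
    ‖(ξᴴ * superO lam u θk L ν).trace‖ ^ 2 ≤
      ((ξᴴ * superO lam u θk L ξ).trace).re * ((νᴴ * superO lam u θk L ν).trace).re := by
  classical
  set W : K × Fin d × Fin d → ℝ := fun p =>
    (2 : ℝ)⁻¹ * Real.exp (-θk p.1 / 2) *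
      logMean (Real.exp (θk p.1 / 2) * lam p.2.1) (Real.exp (-θk p.1 / 2) * lam p.2.2) with hW
  have hWpos : ∀ p, 0 < W p := by
    intro p
    exact mul_pos (mul_pos (by norm_num) (Real.exp_pos _))
      (logMean_pos (mul_pos (Real.exp_pos _) (hpos _)) (mul_pos (Real.exp_pos _) (hpos _)))
  set a : Matrix (Fin d) (Fin d) ℂ → EuclideanSpace ℂ (K × Fin d × Fin d) := fun X => WithLp.toLp 2 (fun p =>
    ((Real.sqrt (W p) : ℝ) : ℂ) *
      (star (u p.2.1) ⬝ᵥ (((L p.1)ᴴ * X - X * (L p.1)ᴴ) *ᵥ u p.2.2))) with ha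
  have key : ∀ X Y : Matrix (Fin d) (Fin d) ℂ,
      (Xᴴ * superO lam u θk L Y).trace = inner ℂ (a X) (a Y) := by
    intro X Y
    rw [trace_superO, PiLp.inner_apply]
    simp only [RCLike.inner_apply, ha, PiLp.toLp_apply]
    rw [Fintype.sum_prod_type]
    apply Finset.sum_congr rfl; intro k _
    rw [Fintype.sum_prod_type]
    apply Finset.sum_congr rfl; intro n _
    apply Finset.sum_congr rfl; intro m _
    have hs : ((Real.sqrt (W (k, n, m)) : ℝ) : ℂ) * ((Real.sqrt (W (k, n, m)) : ℝ) : ℂ)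
        = ((W (k, n, m) : ℝ) : ℂ) := by
      rw [← Complex.ofReal_mul, Real.mul_self_sqrt (le_of_lt (hWpos _))]
    simp only [_root_.map_mul, Complex.conj_ofReal]
    rw [← hs]
    ring
  have him : ∀ X : Matrix (Fin d) (Fin d) ℂ, ((Xᴴ * superO lam u θk L X).trace).im = 0 := by
    intro X
    rw [key]
    exact inner_self_im (𝕜 := ℂ) (a X)
  have hre : ∀ X : Matrix (Fin d) (Fin d) ℂ,
      ((Xᴴ * superO lam u θk L X).trace).re = ‖a X‖ ^ 2 := by
    intro X
    rw [key]
    exact inner_self_eq_norm_sq (𝕜 := ℂ) (a X)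
  refine ⟨him ξ, ?_, him ν, ?_, ?_⟩
  · rw [hre]; positivity
  · rw [hre]; positivity
  · rw [hre, hre, key]
    calc ‖(inner ℂ (a ξ) (a ν) : ℂ)‖ ^ 2 ≤ (‖a ξ‖ * ‖a ν‖) ^ 2 := by
          gcongr; exact norm_inner_le_norm _ _
      _ = ‖a ξ‖ ^ 2 * ‖a ν‖ ^ 2 := by ring
end

section
/- Let φ be a positive-definite density matrix on ℂ^d with spectral decomposition φ = Σ_n λ_n u_n u_nᴴ, define log φ := Σ_n (ln λ_n)·u_n u_nᴴ, and let θ ∈ ℝ. Then for every d×d complex matrix X, S_{φ,θ}([X, log φ] − θ·X) = e^{−θ/2}·X·φ − e^{θ/2}·φ·X. -/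
open Matrix
open scoped ComplexOrder

section helpers
variable {d : ℕ}

lemma hlp_vecMulVec_mulVec (a b v : Fin d → ℂ) :
    vecMulVec a b *ᵥ v = (b ⬝ᵥ v) • a := by
  ext i
  simp only [mulVec, dotProduct, vecMulVec_apply, Pi.smul_apply, smul_eq_mul, Finset.mul_sum]
  rw [Finset.sum_mul]
  exact Finset.sum_congr rfl fun k _ => by ring

lemma hlp_vecMul_vecMulVec (w a b : Fin d → ℂ) :
    w ᵥ* vecMulVec a b = (w ⬝ᵥ a) • b := by
  ext j
  simp only [vecMul, dotProduct, vecMulVec_apply, Pi.smul_apply, smul_eq_mul]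
  rw [Finset.sum_mul]
  exact Finset.sum_congr rfl fun k _ => by ring

lemma hlp_mul_vecMulVec (X : Matrix (Fin d) (Fin d) ℂ) (a b : Fin d → ℂ) :
    X * vecMulVec a b = vecMulVec (X *ᵥ a) b := by
  ext i j
  simp [Matrix.mul_apply, mulVec, dotProduct, vecMulVec_apply, Finset.sum_mul, mul_assoc]

lemma hlp_vecMulVec_mul (a b : Fin d → ℂ) (X : Matrix (Fin d) (Fin d) ℂ) :
    vecMulVec a b * X = vecMulVec a (b ᵥ* X) := by
  ext i j
  simp [Matrix.mul_apply, vecMul, dotProduct, vecMulVec_apply, Finset.mul_sum, mul_assoc]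

lemma hlp_smul_vecMulVec (x : ℂ) (a b : Fin d → ℂ) :
    vecMulVec (x • a) b = x • vecMulVec a b := by
  ext i j; simp [vecMulVec_apply, mul_assoc]

lemma hlp_vecMulVec_smul (a : Fin d → ℂ) (x : ℂ) (b : Fin d → ℂ) :
    vecMulVec a (x • b) = x • vecMulVec a b := by
  ext i j; simp [vecMulVec_apply]; ring

lemma hlp_sum_mulVec (f : Fin d → Matrix (Fin d) (Fin d) ℂ) (v : Fin d → ℂ) :
    (∑ n, f n) *ᵥ v = ∑ n, f n *ᵥ v := by
  ext i
  simp only [mulVec, dotProduct, Matrix.sum_apply, Finset.sum_apply, Finset.sum_mul]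
  rw [Finset.sum_comm]

lemma hlp_vecMul_sum (w : Fin d → ℂ) (f : Fin d → Matrix (Fin d) (Fin d) ℂ) :
    w ᵥ* (∑ n, f n) = ∑ n, w ᵥ* f n := by
  ext j
  simp only [vecMul, dotProduct, Matrix.sum_apply, Finset.sum_apply, Finset.mul_sum]
  rw [Finset.sum_comm]

lemma hlp_dotProduct_sum (w : Fin d → ℂ) (f : Fin d → Fin d → ℂ) :
    w ⬝ᵥ (∑ n, f n) = ∑ n, w ⬝ᵥ f n := by
  simp only [dotProduct, Finset.sum_apply, Finset.mul_sum]
  rw [Finset.sum_comm]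

lemma hlp_vecMulVec_sum (f : Fin d → Fin d → ℂ) (b : Fin d → ℂ) :
    vecMulVec (∑ n, f n) b = ∑ n, vecMulVec (f n) b := by
  ext i j
  simp [vecMulVec_apply, Matrix.sum_apply, Finset.sum_apply, Finset.sum_mul]

lemma hlp_sum_vecMulVec (a : Fin d → ℂ) (f : Fin d → Fin d → ℂ) :
    vecMulVec a (∑ n, f n) = ∑ n, vecMulVec a (f n) := by
  ext i j
  simp [vecMulVec_apply, Matrix.sum_apply, Finset.sum_apply, Finset.mul_sum]

lemma hlp_complete (u : Fin d → Fin d → ℂ)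
    (horth : ∀ n m, star (u n) ⬝ᵥ u m = if n = m then 1 else 0) :
    (∑ n : Fin d, vecMulVec (u n) (star (u n))) = (1 : Matrix (Fin d) (Fin d) ℂ) := by
  have h1 : (Matrix.of u) * (Matrix.of u)ᴴ = 1 := by
    ext n m
    have h := horth m n
    simp only [dotProduct, Pi.star_apply] at h
    simp only [Matrix.mul_apply, Matrix.conjTranspose_apply, Matrix.of_apply, Matrix.one_apply]
    rw [show (∑ k, u n k * star (u m k)) = ∑ k, star (u m k) * u n k from
      Finset.sum_congr rfl fun k _ => mul_comm _ _, h]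
    by_cases hnm : n = m <;> simp [hnm, Ne.symm, hnm]
  have h2 : (Matrix.of u)ᴴ * (Matrix.of u) = 1 := mul_eq_one_comm.mp h1
  ext i j
  have h := congrArg (fun M : Matrix (Fin d) (Fin d) ℂ => M j i) h2
  simp only [Matrix.mul_apply, Matrix.conjTranspose_apply, Matrix.of_apply,
    Matrix.one_apply] at h
  simp only [Matrix.sum_apply, vecMulVec_apply, Pi.star_apply, Matrix.one_apply]
  rw [show (∑ n, u n i * star (u n j)) = ∑ n, star (u n j) * u n i from
    Finset.sum_congr rfl fun k _ => mul_comm _ _, h]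
  by_cases hij : i = j <;> simp [hij, Ne.symm, hij]

end helpers

lemma logMean_mul_log_sub {a b : ℝ} (ha : 0 < a) (hb : 0 < b) :
    logMean a b * (Real.log b - Real.log a) = b - a := by
  unfold logMean
  split_ifs with h
  · simp [h]
  · have hl : Real.log a ≠ Real.log b := fun hl =>
      h (Real.log_injOn_pos (Set.mem_Ioi.2 ha) (Set.mem_Ioi.2 hb) hl)
    have h0 : Real.log a - Real.log b ≠ 0 := sub_ne_zero.2 hl
    field_simp
    ring

lemma logMean_key_s11 (θ : ℝ) {x y : ℝ} (hx : 0 < x) (hy : 0 < y) :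
    logMean (Real.exp (θ / 2) * x) (Real.exp (-θ / 2) * y) *
      (Real.log y - Real.log x - θ) =
    Real.exp (-θ / 2) * y - Real.exp (θ / 2) * x := by
  have ha : 0 < Real.exp (θ / 2) * x := mul_pos (Real.exp_pos _) hx
  have hb : 0 < Real.exp (-θ / 2) * y := mul_pos (Real.exp_pos _) hy
  have hlog : Real.log (Real.exp (-θ / 2) * y) - Real.log (Real.exp (θ / 2) * x)
      = Real.log y - Real.log x - θ := by
    rw [Real.log_mul (Real.exp_ne_zero _) (ne_of_gt hy),
      Real.log_mul (Real.exp_ne_zero _) (ne_of_gt hx), Real.log_exp, Real.log_exp]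
    ring
  rw [← hlog]
  exact logMean_mul_log_sub ha hb

theorem stmt11 (d : ℕ) (lam : Fin d → ℝ) (u : Fin d → Fin d → ℂ)
    (hpos : ∀ n, 0 < lam n)
    (horth : ∀ n m, star (u n) ⬝ᵥ u m = if n = m then 1 else 0)
    (φ : Matrix (Fin d) (Fin d) ℂ)
    (hφ : φ = ∑ n : Fin d, (lam n : ℂ) • Matrix.vecMulVec (u n) (star (u n)))
    (htr : φ.trace = 1)
    (Lg : Matrix (Fin d) (Fin d) ℂ)
    (hLg : Lg = ∑ n : Fin d, ((Real.log (lam n) : ℝ) : ℂ) • Matrix.vecMulVec (u n) (star (u n)))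
    (θ : ℝ) (X : Matrix (Fin d) (Fin d) ℂ) :
    tilted lam u θ ((X * Lg - Lg * X) - (θ : ℂ) • X) =
      ((Real.exp (-θ / 2) : ℝ) : ℂ) • (X * φ) - ((Real.exp (θ / 2) : ℝ) : ℂ) • (φ * X) := by
  classical
  have hcomp := hlp_complete u horth
  set Xc : Fin d → Fin d → ℂ := fun n m => star (u n) ⬝ᵥ (X *ᵥ u m) with hXc
  set V : Fin d → Fin d → Matrix (Fin d) (Fin d) ℂ :=
    fun n m => vecMulVec (u n) (star (u m)) with hV
  -- Lg acts diagonally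
  have hLgv : ∀ m, Lg *ᵥ u m = ((Real.log (lam m) : ℝ) : ℂ) • u m := by
    intro m
    rw [hLg, hlp_sum_mulVec]
    have : ∀ n : Fin d, (((Real.log (lam n) : ℝ) : ℂ) • vecMulVec (u n) (star (u n))) *ᵥ u m
        = (if n = m then ((Real.log (lam m) : ℝ) : ℂ) else 0) • u n := by
      intro n
      rw [smul_mulVec, hlp_vecMulVec_mulVec, horth]
      by_cases hnm : n = m <;> simp [hnm, smul_smul]
    rw [Finset.sum_congr rfl fun n _ => this n]
    simp
  have hLgdot : ∀ n (w : Fin d → ℂ),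
      star (u n) ⬝ᵥ (Lg *ᵥ w) = ((Real.log (lam n) : ℝ) : ℂ) * (star (u n) ⬝ᵥ w) := by
    intro n w
    rw [hLg, hlp_sum_mulVec, hlp_dotProduct_sum]
    have : ∀ k : Fin d, star (u n) ⬝ᵥ
        ((((Real.log (lam k) : ℝ) : ℂ) • vecMulVec (u k) (star (u k))) *ᵥ w)
        = if k = n then ((Real.log (lam n) : ℝ) : ℂ) * (star (u n) ⬝ᵥ w) else 0 := by
      intro k
      rw [smul_mulVec, hlp_vecMulVec_mulVec, dotProduct_smul, dotProduct_smul,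
        horth n k]
      by_cases hkn : k = n
      · subst hkn; simp [smul_eq_mul, mul_comm, mul_left_comm]
      · simp [Ne.symm hkn, hkn]
    rw [Finset.sum_congr rfl fun k _ => this k]
    simp
  -- matrix element of the commutator expression
  have hA : ∀ n m, star (u n) ⬝ᵥ (((X * Lg - Lg * X) - (θ : ℂ) • X) *ᵥ u m)
      = ((Real.log (lam m) - Real.log (lam n) - θ : ℝ) : ℂ) * Xc n m := by
    intro n m
    rw [sub_mulVec, sub_mulVec, dotProduct_sub, dotProduct_sub, smul_mulVec,
      dotProduct_smul, ← mulVec_mulVec, ← mulVec_mulVec, hLgv m, mulVec_smul,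
      dotProduct_smul, hLgdot n (X *ᵥ u m)]
    simp only [smul_eq_mul]
    push_cast
    ring
  -- expansion of X *ᵥ u m and star (u n) ᵥ* X
  have hXv : ∀ m, X *ᵥ u m = ∑ n, Xc n m • u n := by
    intro m
    conv_lhs => rw [← Matrix.one_mulVec (X *ᵥ u m), ← hcomp]
    rw [hlp_sum_mulVec]
    exact Finset.sum_congr rfl fun n _ => by rw [hlp_vecMulVec_mulVec]
  have hvX : ∀ n, star (u n) ᵥ* X = ∑ m, Xc n m • star (u m) := by
    intro n
    conv_lhs => rw [← Matrix.vecMul_one (star (u n) ᵥ* X), ← hcomp]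
    rw [hlp_vecMul_sum]
    refine Finset.sum_congr rfl fun m _ => ?_
    rw [hlp_vecMul_vecMulVec]
    simp only [hXc]
    rw [dotProduct_mulVec]
  -- X * φ and φ * X as double sums
  have hR1 : X * φ = ∑ n, ∑ m, ((lam m : ℂ) * Xc n m) • V n m := by
    rw [hφ, Finset.mul_sum]
    rw [Finset.sum_comm]
    refine Finset.sum_congr rfl fun m _ => ?_
    rw [mul_smul_comm, hlp_mul_vecMulVec, hXv m, hlp_vecMulVec_sum, Finset.smul_sum]
    refine Finset.sum_congr rfl fun n _ => ?_
    rw [hlp_smul_vecMulVec, smul_smul, mul_comm]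
  have hR2 : φ * X = ∑ n, ∑ m, ((lam n : ℂ) * Xc n m) • V n m := by
    rw [hφ, Finset.sum_mul]
    refine Finset.sum_congr rfl fun n _ => ?_
    rw [smul_mul_assoc, hlp_vecMulVec_mul, hvX n, hlp_sum_vecMulVec, Finset.smul_sum]
    refine Finset.sum_congr rfl fun m _ => ?_
    rw [hlp_vecMulVec_smul, smul_smul]
  -- final computation
  unfold tilted
  rw [hR1, hR2, Finset.smul_sum, Finset.smul_sum, ← Finset.sum_sub_distrib]
  refine Finset.sum_congr rfl fun n _ => ?_
  rw [Finset.smul_sum, Finset.smul_sum, ← Finset.sum_sub_distrib]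
  refine Finset.sum_congr rfl fun m _ => ?_
  rw [hA n m]
  have hkey := logMean_key_s11 θ (hpos n) (hpos m)
  rw [smul_smul, smul_smul, smul_smul, ← sub_smul]
  congr 1
  have : ((logMean (Real.exp (θ / 2) * lam n) (Real.exp (-θ / 2) * lam m) : ℝ) : ℂ) *
      ((Real.log (lam m) - Real.log (lam n) - θ : ℝ) : ℂ)
      = ((Real.exp (-θ / 2) * lam m - Real.exp (θ / 2) * lam n : ℝ) : ℂ) := by
    rw [← Complex.ofReal_mul, hkey]
  rw [← mul_assoc, this]
  push_cast
  ring
end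

section
/- Let ρ be a positive-definite density matrix on ℂ^d with spectral decomposition ρ = Σ_n λ_n u_n u_nᴴ and log ρ := Σ_n (ln λ_n)·u_n u_nᴴ. Let H be a Hermitian d×d matrix, β ∈ ℝ, K a finite index set, ω : K → ℝ, and L : K → M_d(ℂ) satisfying [L_kᴴ, H] = −ω_k·L_kᴴ for all k. Assume there is an involution σ : K → K (σ∘σ = id) with ω_{σ(k)} = −ω_k and L_{σ(k)} = e^{−β ω_k/2}·L_kᴴ for all k. Then (1/2)·Σ_{k∈K} e^{−β ω_k/2}·[L_k, S_{ρ, β ω_k}([L_kᴴ, −log ρ − β·H])] = Σ_{k∈K} (L_k ρ L_kᴴ − (1/2)(L_kᴴL_kρ + ρL_kᴴL_k)). -/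
open Matrix
open scoped ComplexOrder

lemma aux_logMean_mul {x y : ℝ} (hx : 0 < x) (hy : 0 < y) :
    logMean x y * (Real.log x - Real.log y) = x - y := by
  unfold logMean
  by_cases h : x = y
  · simp [h]
  · rw [if_neg h, div_mul_cancel₀]
    exact sub_ne_zero.mpr fun hl =>
      h (Real.log_injOn_pos (Set.mem_Ioi.mpr hx) (Set.mem_Ioi.mpr hy) hl)

lemma aux_hV1 {d : ℕ} (u : Fin d → Fin d → ℂ)
    (horth : ∀ n m, star (u n) ⬝ᵥ u m = if n = m then 1 else 0) :
    (Matrix.of fun i n => u n i)ᴴ * (Matrix.of fun i n => u n i) = 1 := by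
  ext n m
  simp only [mul_apply, conjTranspose_apply, of_apply, one_apply]
  rw [← horth n m]
  simp [dotProduct]

lemma aux_ME_entry {d : ℕ} (u : Fin d → Fin d → ℂ) (X : Matrix (Fin d) (Fin d) ℂ) (n m : Fin d) :
    ((Matrix.of fun i n => u n i)ᴴ * X * (Matrix.of fun i n => u n i)) n m
      = star (u n) ⬝ᵥ (X *ᵥ u m) := by
  simp only [mul_apply, conjTranspose_apply, of_apply, dotProduct, mulVec, Pi.star_apply,
    Finset.sum_mul, Finset.mul_sum]
  rw [Finset.sum_comm]
  exact Finset.sum_congr rfl fun i _ => Finset.sum_congr rfl fun j _ => by ring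

lemma aux_ME_E {d : ℕ} (u : Fin d → Fin d → ℂ)
    (horth : ∀ n m, star (u n) ⬝ᵥ u m = if n = m then 1 else 0) (n m : Fin d) :
    (Matrix.of fun i n => u n i)ᴴ * Matrix.vecMulVec (u n) (star (u m))
      * (Matrix.of fun i n => u n i) = Matrix.single n m 1 := by
  ext p q
  have e1 : Matrix.vecMulVec (u n) (star (u m)) *ᵥ u q = (star (u m) ⬝ᵥ u q) • u n := by
    funext i
    simp [mulVec, vecMulVec_apply, dotProduct, Finset.sum_mul, Finset.mul_sum, Pi.smul_apply,
      smul_eq_mul]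
    exact Finset.sum_congr rfl fun j _ => by ring
  rw [aux_ME_entry, e1, dotProduct_smul, horth, horth]
  by_cases h1 : n = p <;> by_cases h2 : m = q <;>
    simp [h1, h2, Matrix.single] <;> aesop

lemma aux_sum_smul_std {d : ℕ} (c : Fin d → ℂ) :
    ∑ n, c n • Matrix.single n n (1 : ℂ) = Matrix.diagonal c := by
  ext i j
  rw [Matrix.sum_apply]
  simp only [Matrix.smul_apply, Matrix.single, Matrix.of_apply, smul_eq_mul,
    Matrix.diagonal_apply]
  rw [Finset.sum_eq_single i (fun b _ hb => by simp [hb])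
    (fun h => absurd (Finset.mem_univ i) h)]
  by_cases h : i = j <;> simp [h]

lemma aux_sum2_std {d : ℕ} (f : Fin d → Fin d → ℂ) (p q : Fin d) :
    (∑ n : Fin d, ∑ m : Fin d, f n m • Matrix.single n m (1 : ℂ)) p q = f p q := by
  simp only [Matrix.sum_apply, Matrix.smul_apply, Matrix.single, Matrix.of_apply,
    smul_eq_mul, mul_ite, mul_one, mul_zero, ite_and]
  rw [Finset.sum_eq_single p (fun b _ hb => by simp [hb])
    (fun h => absurd (Finset.mem_univ p) h)]
  simp

theorem stmt12 (d : ℕ) (lam : Fin d → ℝ) (u : Fin d → Fin d → ℂ)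
    (hpos : ∀ n, 0 < lam n)
    (horth : ∀ n m, star (u n) ⬝ᵥ u m = if n = m then 1 else 0)
    (ρ : Matrix (Fin d) (Fin d) ℂ)
    (hρ : ρ = ∑ n : Fin d, (lam n : ℂ) • Matrix.vecMulVec (u n) (star (u n)))
    (htr : ρ.trace = 1)
    (Lg : Matrix (Fin d) (Fin d) ℂ)
    (hLg : Lg = ∑ n : Fin d, ((Real.log (lam n) : ℝ) : ℂ) • Matrix.vecMulVec (u n) (star (u n)))
    (H : Matrix (Fin d) (Fin d) ℂ) (hH : Hᴴ = H) (β : ℝ)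
    (K : Type*) [Fintype K] (ω : K → ℝ) (L : K → Matrix (Fin d) (Fin d) ℂ)
    (hLH : ∀ k, (L k)ᴴ * H - H * (L k)ᴴ = (-(ω k : ℂ)) • (L k)ᴴ)
    (σ : K → K) (hσ : ∀ k, σ (σ k) = k) (hω : ∀ k, ω (σ k) = -ω k)
    (hLσ : ∀ k, L (σ k) = ((Real.exp (-(β * ω k) / 2) : ℝ) : ℂ) • (L k)ᴴ) :
    ((2 : ℂ)⁻¹ • ∑ k : K, ((Real.exp (-(β * ω k) / 2) : ℝ) : ℂ) •
        (L k * tilted lam u (β * ω k)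
            ((L k)ᴴ * (-Lg - (β : ℂ) • H) - (-Lg - (β : ℂ) • H) * (L k)ᴴ) -
          tilted lam u (β * ω k)
            ((L k)ᴴ * (-Lg - (β : ℂ) • H) - (-Lg - (β : ℂ) • H) * (L k)ᴴ) * L k)) =
      ∑ k : K, (L k * ρ * (L k)ᴴ -
        (2 : ℂ)⁻¹ • ((L k)ᴴ * L k * ρ + ρ * ((L k)ᴴ * L k))) := by
  set V : Matrix (Fin d) (Fin d) ℂ := Matrix.of fun i n => u n i with hVdef
  have h1 : Vᴴ * V = 1 := aux_hV1 u horth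
  have h2 : V * Vᴴ = 1 := mul_eq_one_comm.mp h1
  have hcancel : ∀ X : Matrix (Fin d) (Fin d) ℂ, V * (Vᴴ * X * V) * Vᴴ = X := by
    intro X
    simp only [Matrix.mul_assoc, h2, Matrix.mul_one]
    rw [← Matrix.mul_assoc, h2, Matrix.one_mul]
  have hinj : ∀ X Y : Matrix (Fin d) (Fin d) ℂ, Vᴴ * X * V = Vᴴ * Y * V → X = Y := by
    intro X Y h
    have := congrArg (fun Z => V * Z * Vᴴ) h
    simpa only [hcancel] using this
  have hE : ∀ n m, Vᴴ * Matrix.vecMulVec (u n) (star (u m)) * V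
      = Matrix.single n m 1 := fun n m => aux_ME_E u horth n m
  have hEntry : ∀ (X : Matrix (Fin d) (Fin d) ℂ) n m,
      (Vᴴ * X * V) n m = star (u n) ⬝ᵥ (X *ᵥ u m) := fun X n m => aux_ME_entry u X n m
  have hmulME : ∀ A C : Matrix (Fin d) (Fin d) ℂ,
      Vᴴ * (A * C) * V = (Vᴴ * A * V) * (Vᴴ * C * V) := by
    intro A C
    rw [show (Vᴴ * A * V) * (Vᴴ * C * V) = Vᴴ * A * (V * Vᴴ) * C * V by
      simp only [Matrix.mul_assoc], h2, Matrix.mul_one]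
    simp only [Matrix.mul_assoc]
  have hdiagME : ∀ c : Fin d → ℝ,
      Vᴴ * (∑ n, ((c n : ℝ) : ℂ) • Matrix.vecMulVec (u n) (star (u n))) * V
        = Matrix.diagonal fun n => ((c n : ℝ) : ℂ) := by
    intro c
    rw [Matrix.mul_sum, Matrix.sum_mul, ← aux_sum_smul_std fun n => ((c n : ℝ) : ℂ)]
    exact Finset.sum_congr rfl fun n _ => by
      rw [Matrix.mul_smul, Matrix.smul_mul, hE n n]
  have hρME : Vᴴ * ρ * V = Matrix.diagonal fun n => ((lam n : ℝ) : ℂ) := by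
    rw [hρ]; exact hdiagME lam
  have hLgME : Vᴴ * Lg * V = Matrix.diagonal fun n => ((Real.log (lam n) : ℝ) : ℂ) := by
    rw [hLg]; exact hdiagME fun n => Real.log (lam n)
  -- the key computation: the tilted operator applied to the relevant commutator
  have key : ∀ (M : Matrix (Fin d) (Fin d) ℂ) (θ : ℝ),
      tilted lam u θ (Lg * M - M * Lg + ((θ : ℝ) : ℂ) • M)
        = ((Real.exp (θ / 2) : ℝ) : ℂ) • (ρ * M)
          - ((Real.exp (-θ / 2) : ℝ) : ℂ) • (M * ρ) := by
    intro M θ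
    set B := Vᴴ * M * V with hB
    apply hinj
    have hargME : Vᴴ * (Lg * M - M * Lg + ((θ : ℝ) : ℂ) • M) * V
        = Matrix.diagonal (fun n => ((Real.log (lam n) : ℝ) : ℂ)) * B
          - B * Matrix.diagonal (fun n => ((Real.log (lam n) : ℝ) : ℂ)) + ((θ : ℝ) : ℂ) • B := by
      simp only [Matrix.mul_sub, Matrix.sub_mul, Matrix.mul_add, Matrix.add_mul,
        Matrix.mul_smul, Matrix.smul_mul, hmulME, hLgME, hB]
    have harg : ∀ n m, star (u n) ⬝ᵥ ((Lg * M - M * Lg + ((θ : ℝ) : ℂ) • M) *ᵥ u m)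
        = ((Real.log (lam n) - Real.log (lam m) + θ : ℝ) : ℂ) * B n m := by
      intro n m
      rw [← hEntry, hargME]
      simp only [Matrix.add_apply, Matrix.sub_apply, Matrix.smul_apply, Matrix.diagonal_mul,
        Matrix.mul_diagonal, smul_eq_mul]
      push_cast
      ring
    -- compute the tilted LHS
    have hlhs : Vᴴ * tilted lam u θ (Lg * M - M * Lg + ((θ : ℝ) : ℂ) • M) * V
        = ∑ n : Fin d, ∑ m : Fin d,
            (((Real.exp (θ / 2) * lam n - Real.exp (-θ / 2) * lam m : ℝ) : ℂ) * B n m) •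
              Matrix.single n m (1 : ℂ) := by
      unfold tilted
      rw [Matrix.mul_sum, Matrix.sum_mul]
      refine Finset.sum_congr rfl fun n _ => ?_
      rw [Matrix.mul_sum, Matrix.sum_mul]
      refine Finset.sum_congr rfl fun m _ => ?_
      rw [harg n m]
      have hcoef : ((logMean (Real.exp (θ / 2) * lam n) (Real.exp (-θ / 2) * lam m) : ℝ) : ℂ)
            * ((Real.log (lam n) - Real.log (lam m) + θ : ℝ) : ℂ)
          = ((Real.exp (θ / 2) * lam n - Real.exp (-θ / 2) * lam m : ℝ) : ℂ) := by
        rw [← Complex.ofReal_mul]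
        congr 1
        have hlog : Real.log (Real.exp (θ / 2) * lam n) - Real.log (Real.exp (-θ / 2) * lam m)
            = Real.log (lam n) - Real.log (lam m) + θ := by
          rw [Real.log_mul (Real.exp_ne_zero _) (ne_of_gt (hpos n)),
            Real.log_mul (Real.exp_ne_zero _) (ne_of_gt (hpos m)), Real.log_exp, Real.log_exp]
          ring
        rw [← hlog]
        exact aux_logMean_mul (mul_pos (Real.exp_pos _) (hpos n))
          (mul_pos (Real.exp_pos _) (hpos m))
      rw [Matrix.mul_smul, Matrix.smul_mul, Matrix.mul_smul, Matrix.smul_mul, hE n m,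
        smul_smul, ← mul_assoc, hcoef]
    rw [hlhs]
    -- compute RHS matrix elements
    have hrhs : Vᴴ * (((Real.exp (θ / 2) : ℝ) : ℂ) • (ρ * M)
          - ((Real.exp (-θ / 2) : ℝ) : ℂ) • (M * ρ)) * V
        = ((Real.exp (θ / 2) : ℝ) : ℂ) • (Matrix.diagonal (fun n => ((lam n : ℝ) : ℂ)) * B)
          - ((Real.exp (-θ / 2) : ℝ) : ℂ) • (B * Matrix.diagonal fun n => ((lam n : ℝ) : ℂ)) := by
      simp only [Matrix.mul_sub, Matrix.sub_mul, Matrix.mul_smul, Matrix.smul_mul, hmulME,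
        hρME, hB]
    rw [hrhs]
    ext p q
    rw [aux_sum2_std]
    simp only [Matrix.sub_apply, Matrix.smul_apply, Matrix.diagonal_mul, Matrix.mul_diagonal,
      smul_eq_mul]
    push_cast
    ring
  -- rewrite each argument of tilted using hLH
  have hcomm : ∀ k, (L k)ᴴ * (-Lg - (β : ℂ) • H) - (-Lg - (β : ℂ) • H) * (L k)ᴴ
      = Lg * (L k)ᴴ - (L k)ᴴ * Lg + ((β * ω k : ℝ) : ℂ) • (L k)ᴴ := by
    intro k
    have e := hLH k
    have expand : (L k)ᴴ * (-Lg - (β : ℂ) • H) - (-Lg - (β : ℂ) • H) * (L k)ᴴ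
        = (Lg * (L k)ᴴ - (L k)ᴴ * Lg) - (β : ℂ) • ((L k)ᴴ * H - H * (L k)ᴴ) := by
      simp only [Matrix.mul_sub, Matrix.sub_mul, Matrix.mul_smul, Matrix.smul_mul,
        Matrix.mul_neg, Matrix.neg_mul, smul_sub]
      abel
    rw [expand, e, smul_smul]
    push_cast
    module
  -- per-term identity
  have hterm : ∀ k, ((Real.exp (-(β * ω k) / 2) : ℝ) : ℂ) •
        (L k * tilted lam u (β * ω k)
            ((L k)ᴴ * (-Lg - (β : ℂ) • H) - (-Lg - (β : ℂ) • H) * (L k)ᴴ) -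
          tilted lam u (β * ω k)
            ((L k)ᴴ * (-Lg - (β : ℂ) • H) - (-Lg - (β : ℂ) • H) * (L k)ᴴ) * L k)
      = (L k * (ρ * (L k)ᴴ) - ρ * (L k)ᴴ * L k)
        - ((Real.exp (-(β * ω k)) : ℝ) : ℂ) •
            (L k * ((L k)ᴴ * ρ) - (L k)ᴴ * ρ * L k) := by
    intro k
    rw [hcomm k, key ((L k)ᴴ) (β * ω k)]
    have ha : ((Real.exp (-(β * ω k) / 2) : ℝ) : ℂ) * ((Real.exp ((β * ω k) / 2) : ℝ) : ℂ)
        = 1 := by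
      rw [← Complex.ofReal_mul, ← Real.exp_add,
        show (-(β * ω k) / 2 + β * ω k / 2 : ℝ) = 0 by ring, Real.exp_zero, Complex.ofReal_one]
    have hb : ((Real.exp (-(β * ω k) / 2) : ℝ) : ℂ) * ((Real.exp (-(β * ω k) / 2) : ℝ) : ℂ)
        = ((Real.exp (-(β * ω k)) : ℝ) : ℂ) := by
      rw [← Complex.ofReal_mul, ← Real.exp_add,
        show (-(β * ω k) / 2 + -(β * ω k) / 2 : ℝ) = -(β * ω k) by ring]
    have hexp2 : (-(β * ω k) / 2 : ℝ) = -((β * ω k) / 2) := by ring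
    simp only [hexp2] at *
    simp only [Matrix.mul_sub, Matrix.sub_mul, Matrix.mul_smul, Matrix.smul_mul, smul_sub,
      smul_smul, ha, hb, one_smul]
    simp only [Matrix.mul_assoc]
    abel
  rw [Finset.sum_congr rfl fun k _ => hterm k]
  -- reindex the exponential-weighted sum using the involution σ
  have hstar : ∀ (r : ℝ) (A : Matrix (Fin d) (Fin d) ℂ),
      (((r : ℝ) : ℂ) • A)ᴴ = ((r : ℝ) : ℂ) • Aᴴ := by
    intro r A
    rw [Matrix.conjTranspose_smul]
    congr 1
    simp [Complex.ext_iff]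
  have hflip : (∑ k : K, ((Real.exp (-(β * ω k)) : ℝ) : ℂ) •
        (L k * ((L k)ᴴ * ρ) - (L k)ᴴ * ρ * L k))
      = ∑ k : K, ((L k)ᴴ * (L k * ρ) - L k * ρ * (L k)ᴴ) := by
    have hbij : Function.Bijective σ := Function.Involutive.bijective hσ
    rw [← Function.Bijective.sum_comp hbij
      (fun k => ((Real.exp (-(β * ω k)) : ℝ) : ℂ) • (L k * ((L k)ᴴ * ρ) - (L k)ᴴ * ρ * L k))]
    refine Finset.sum_congr rfl fun k _ => ?_
    have hLσk : L (σ k) = ((Real.exp (-(β * ω k) / 2) : ℝ) : ℂ) • (L k)ᴴ := hLσ k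
    have hLσkH : (L (σ k))ᴴ = ((Real.exp (-(β * ω k) / 2) : ℝ) : ℂ) • L k := by
      rw [hLσk, hstar, Matrix.conjTranspose_conjTranspose]
    have hωσ : ω (σ k) = -ω k := hω k
    rw [hωσ, hLσkH, hLσk]
    have hc : ((Real.exp (-(β * -ω k)) : ℝ) : ℂ) * (((Real.exp (-(β * ω k) / 2) : ℝ) : ℂ)
        * ((Real.exp (-(β * ω k) / 2) : ℝ) : ℂ)) = 1 := by
      rw [← Complex.ofReal_mul, ← Complex.ofReal_mul, ← Real.exp_add, ← Real.exp_add]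
      norm_num
    simp only [Matrix.smul_mul, Matrix.mul_smul, smul_sub, smul_smul]
    simp only [hc, one_smul]
  rw [Finset.sum_sub_distrib, hflip, smul_sub, Finset.smul_sum, Finset.smul_sum,
    ← Finset.sum_sub_distrib]
  refine Finset.sum_congr rfl fun k _ => ?_
  simp only [Matrix.mul_assoc]
  module
end
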